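/- For odd n ≥ 3, the commutator subgroup of the group 𝒜 = {((x₁,0,…,0), diag(λ, A)) : x₁ ∈ ℝ, λ ≠ 0, A ∈ GL(n-1,ℝ), λ·det(A) ≠ 0} ⊆ ℝ^n ⋊ GL(n,ℝ) equals 𝒟 = {((x₁,0,…,0), diag(1, D)) : x₁ ∈ ℝ, D ∈ SL(n-1,ℝ)}. -/

import Mathlib

open Matrix

noncomputable def glAut (n : ℕ) : GL (Fin n) ℝ →* MulAut (Multiplicative (Fin n → ℝ)) where
  toFun A :=
    { toFun := fun x => Multiplicative.ofAdd (A.val *ᵥ x.toAdd)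
      invFun := fun x => Multiplicative.ofAdd ((A⁻¹).val *ᵥ x.toAdd)
      left_inv := fun x => by
        have h : (A.val)⁻¹ * A.val = 1 := by
          rw [← Matrix.coe_units_inv, ← Units.val_mul, inv_mul_cancel, Units.val_one]
        simp [Matrix.mulVec_mulVec, h]
      right_inv := fun x => by
        have h : A.val * (A.val)⁻¹ = 1 := by
          rw [← Matrix.coe_units_inv, ← Units.val_mul, mul_inv_cancel, Units.val_one]
        simp [Matrix.mulVec_mulVec, h]
      map_mul' := fun x y => by
        simp [Matrix.mulVec_add, ofAdd_add] }
  map_one' := by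
    ext x
    simp
  map_mul' := fun A B => by
    ext x
    simp [Matrix.mulVec_mulVec]

abbrev AffGL (n : ℕ) := SemidirectProduct (Multiplicative (Fin n → ℝ)) (GL (Fin n) ℝ) (glAut n)

/-- The set 𝒜 = {((x₁,0,…,0), diag(l, A)) : x₁ ∈ ℝ, l ≠ 0, A ∈ GL(n-1,ℝ)} (so that
l · det A ≠ 0) inside ℝⁿ ⋊ GL(n,ℝ). -/
def setA (n : ℕ) (h : 1 + (n - 1) = n) : Set (AffGL n) :=
  {p : AffGL n | ∃ (x₁ l : ℝ) (A : Matrix (Fin (n - 1)) (Fin (n - 1)) ℝ),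
    l ≠ 0 ∧ IsUnit A ∧
    p.left = Multiplicative.ofAdd (fun i : Fin n => if (i : ℕ) = 0 then x₁ else 0) ∧
    (p.right : Matrix (Fin n) (Fin n) ℝ) =
      Matrix.reindex (finSumFinEquiv.trans (finCongr h)) (finSumFinEquiv.trans (finCongr h))
        (Matrix.fromBlocks (Matrix.diagonal fun _ : Fin 1 => l) 0 0 A)}

/-- The set 𝒟 = {((x₁,0,…,0), diag(1, D)) : x₁ ∈ ℝ, D ∈ SL(n-1,ℝ)}. -/
def setD (n : ℕ) (h : 1 + (n - 1) = n) : Set (AffGL n) :=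
  {p : AffGL n | ∃ (x₁ : ℝ) (D : Matrix (Fin (n - 1)) (Fin (n - 1)) ℝ),
    D.det = 1 ∧
    p.left = Multiplicative.ofAdd (fun i : Fin n => if (i : ℕ) = 0 then x₁ else 0) ∧
    (p.right : Matrix (Fin n) (Fin n) ℝ) =
      Matrix.reindex (finSumFinEquiv.trans (finCongr h)) (finSumFinEquiv.trans (finCongr h))
        (Matrix.fromBlocks 1 0 0 D)}

/-!
Elements of 𝒜 are triples (x, l, A) with (x, l, A) (y, m, B) = (x + l y, l m, A B), so
⁅(x, l, A), (y, m, B)⁆ = ((1 - m) x - (1 - l) y, 1, ⁅A, B⁆), which lies in 𝒟 since det ⁅A, B⁆ = 1.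
Conversely, every translation (x, 1, 1) is such a commutator (take l = 1, m = 2), and
SL(k, F) = ⁅GL(k, F), GL(k, F)⁆ for k ≥ 2 and |F| > 2: SL(k, F) is generated by transvections and by
the matrices diag(…, a, …, a⁻¹, …), and these are the commutators of a transvection with a diagonal
matrix, resp. of diag(…, a, …) with the permutation matrix of a transposition.
-/

open scoped commutatorElement

namespace Matrix.GeneralLinearGroup

section CommRing

variable {ι R : Type*} [Fintype ι] [DecidableEq ι] [CommRing R]

def diagonalUnits : (ι → Rˣ) →* GL ι R :=
  (Units.map (diagonalRingHom ι R).toMonoidHom).comp MulEquiv.piUnits.symm.toMonoidHom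

@[simp]
lemma val_diagonalUnits (d : ι → Rˣ) :
    (diagonalUnits d : Matrix ι ι R) = diagonal fun k ↦ (d k : R) :=
  rfl

lemma swap_inv (i j : ι) : (swap R i j)⁻¹ = swap R i j :=
  inv_eq_of_mul_eq_one_right (Units.ext (swap_mul_self i j))

lemma swap_mul_diagonalUnits_mul_swap (i j : ι) (d : ι → Rˣ) :
    swap R i j * diagonalUnits d * swap R i j = diagonalUnits (d ∘ Equiv.swap i j) := by
  ext : 1
  rw [Units.val_mul, Units.val_mul, val_diagonalUnits, val_diagonalUnits]
  change Matrix.swap R i j * _ * Matrix.swap R i j = _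
  rw [Matrix.swap, PEquiv.toMatrix_toPEquiv_mul, PEquiv.mul_toMatrix_toPEquiv,
    submatrix_submatrix, Equiv.symm_swap]
  exact submatrix_diagonal_equiv _ _

lemma diagonalUnits_mul_transvection_mul_inv (d : ι → Rˣ) {i j : ι} (hij : i ≠ j) (c : R) :
    diagonalUnits d * SpecialLinearGroup.toGL (SpecialLinearGroup.transvection hij c) *
        (diagonalUnits d)⁻¹ =
      SpecialLinearGroup.toGL (SpecialLinearGroup.transvection hij (d i * c * (d j)⁻¹ : R)) := by
  ext k l
  rw [← map_inv]
  simp only [Units.val_mul, val_diagonalUnits, SpecialLinearGroup.coe_GL_coe_matrix,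
    SpecialLinearGroup.transvection_coe, mul_diagonal, diagonal_mul, add_apply, one_apply,
    single_apply, Pi.inv_apply]
  split_ifs <;> grind [Units.mul_inv]

lemma commutator_diagonalUnits_transvection {i j : ι} (hij : i ≠ j) (a : Rˣ) (c : R) :
    ⁅diagonalUnits (Pi.mulSingle i a),
        SpecialLinearGroup.toGL (SpecialLinearGroup.transvection hij c)⁆ =
      SpecialLinearGroup.toGL (SpecialLinearGroup.transvection hij ((a - 1) * c)) := by
  rw [commutatorElement_def, diagonalUnits_mul_transvection_mul_inv, ← map_inv,
    SpecialLinearGroup.transvection_inv, ← map_mul, ← SpecialLinearGroup.transvection_add]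
  congr 2
  simp [hij.symm]
  ring

end CommRing

variable {ι F : Type*} [Fintype ι] [DecidableEq ι] [Field F]

lemma commutator_diagonalUnits_swap {i j : ι} (hij : i ≠ j) {a : F} (ha : a ≠ 0) :
    ⁅diagonalUnits (Pi.mulSingle i (Units.mk0 a ha)), swap F i j⁆ =
      SpecialLinearGroup.toGL (SpecialLinearGroup.diag2n hij a ha) := by
  rw [commutatorElement_def, mul_assoc, mul_assoc, ← mul_assoc _ _ (swap F i j)⁻¹, swap_inv,
    ← map_inv, swap_mul_diagonalUnits_mul_swap, ← map_mul]
  ext : 1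
  rw [val_diagonalUnits, SpecialLinearGroup.coe_GL_coe_matrix, SpecialLinearGroup.diag2n_coe]
  congr 1
  ext k
  simp only [Pi.mul_apply, Function.comp_apply, Pi.inv_apply, Pi.mulSingle_apply,
    Equiv.swap_apply_def]
  split_ifs <;> simp_all [eq_comm, apply_ite]

theorem commutator_eq_ker_det [Nontrivial ι] {a : F} (ha₀ : a ≠ 0) (ha₁ : a ≠ 1) :
    commutator (GL ι F) = (det : GL ι F →* Fˣ).ker := by
  refine le_antisymm (Abelianization.commutator_subset_ker _) fun A hA ↦ ?_
  obtain ⟨B, rfl⟩ : ∃ B : SpecialLinearGroup ι F, SpecialLinearGroup.toGL B = A :=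
    ⟨⟨A, congr_arg Units.val hA⟩, Units.ext rfl⟩
  refine SpecialLinearGroup.diagonal_transvection_induction'
    (fun B ↦ SpecialLinearGroup.toGL B ∈ commutator (GL ι F)) B ?_ ?_ ?_
  · intro i j hij c hc
    rw [← commutator_diagonalUnits_swap hij hc]
    exact Subgroup.commutator_mem_commutator (Subgroup.mem_top _) (Subgroup.mem_top _)
  · intro i j hij c
    have hc : c = ((Units.mk0 a ha₀ : F) - 1) * (c / (a - 1)) := by
      rw [Units.val_mk0, mul_div_cancel₀ _ (sub_ne_zero_of_ne ha₁)]
    rw [hc, ← commutator_diagonalUnits_transvection]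
    exact Subgroup.commutator_mem_commutator (Subgroup.mem_top _) (Subgroup.mem_top _)
  · intro A B hA hB
    rw [map_mul]
    exact mul_mem hA hB

end Matrix.GeneralLinearGroup
namespace AffGL

variable {n : ℕ} (h : 1 + (n - 1) = n)

def blockEquiv : Fin 1 ⊕ Fin (n - 1) ≃ Fin n := finSumFinEquiv.trans (finCongr h)

def blockDiagMatrix : ℝ × Matrix (Fin (n - 1)) (Fin (n - 1)) ℝ →* Matrix (Fin n) (Fin n) ℝ where
  toFun p := reindex (blockEquiv h) (blockEquiv h) (fromBlocks (diagonal fun _ ↦ p.1) 0 0 p.2)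
  map_one' := by
    rw [Prod.fst_one, Prod.snd_one, diagonal_one, fromBlocks_one, reindex_apply]
    exact submatrix_one_equiv _
  map_mul' p q := by
    simp [reindex_apply, submatrix_mul_equiv, fromBlocks_multiply, diagonal_mul_diagonal]

def blockDiag : ℝˣ × GL (Fin (n - 1)) ℝ →* GL (Fin n) ℝ :=
  (Units.map (blockDiagMatrix h)).comp MulEquiv.prodUnits.symm.toMonoidHom

lemma val_blockDiag (p : ℝˣ × GL (Fin (n - 1)) ℝ) :
    (blockDiag h p : Matrix (Fin n) (Fin n) ℝ) =
      reindex (blockEquiv h) (blockEquiv h) (fromBlocks (diagonal fun _ ↦ (p.1 : ℝ)) 0 0 p.2) :=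
  rfl

def axisVec (x : ℝ) : Fin n → ℝ := Pi.single (blockEquiv h (.inl 0)) x

lemma axisVec_eq_ite (x : ℝ) : axisVec h x = fun i : Fin n ↦ if (i : ℕ) = 0 then x else 0 := by
  ext i
  simp [axisVec, Pi.single_apply, blockEquiv, Fin.ext_iff]

lemma axisVec_add (x y : ℝ) : axisVec h (x + y) = axisVec h x + axisVec h y :=
  Pi.single_add (f := fun _ ↦ ℝ) _ x y

lemma blockDiag_mulVec_axisVec (p : ℝˣ × GL (Fin (n - 1)) ℝ) (y : ℝ) :
    (blockDiag h p : Matrix (Fin n) (Fin n) ℝ) *ᵥ axisVec h y = axisVec h (p.1 * y) := by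
  ext i
  obtain ⟨k, rfl⟩ := (blockEquiv h).surjective i
  rw [axisVec, axisVec, mulVec_single, val_blockDiag]
  rcases k with k | k
  · simp [Subsingleton.elim k 0, mul_comm]
  · simp

def affElem (x : ℝ) (p : ℝˣ × GL (Fin (n - 1)) ℝ) : AffGL n :=
  ⟨Multiplicative.ofAdd (axisVec h x), blockDiag h p⟩

lemma affElem_right (x : ℝ) (p : ℝˣ × GL (Fin (n - 1)) ℝ) :
    (affElem h x p).right = blockDiag h p :=
  rfl

lemma affElem_mul (x y : ℝ) (p q : ℝˣ × GL (Fin (n - 1)) ℝ) :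
    affElem h x p * affElem h y q = affElem h (x + p.1 * y) (p * q) := by
  refine SemidirectProduct.ext ?_ ((blockDiag h).map_mul p q).symm
  change Multiplicative.ofAdd (axisVec h x + (blockDiag h p : Matrix _ _ ℝ) *ᵥ axisVec h y) = _
  rw [blockDiag_mulVec_axisVec, ← axisVec_add]
  rfl

lemma affElem_zero_one : affElem h 0 1 = 1 :=
  SemidirectProduct.ext (by simp only [affElem, axisVec, Pi.single_zero]; rfl) (map_one _)

lemma affElem_inv (x : ℝ) (p : ℝˣ × GL (Fin (n - 1)) ℝ) :
    (affElem h x p)⁻¹ = affElem h (-(x / p.1)) p⁻¹ := by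
  refine inv_eq_of_mul_eq_one_right ?_
  rw [affElem_mul, mul_inv_cancel, mul_neg, mul_div_cancel₀ _ p.1.ne_zero, add_neg_cancel]
  exact affElem_zero_one h

lemma commutatorElement_affElem (x y : ℝ) (p q : ℝˣ × GL (Fin (n - 1)) ℝ) :
    ⁅affElem h x p, affElem h y q⁆ = affElem h ((1 - q.1) * x - (1 - p.1) * y) ⁅p, q⁆ := by
  rw [commutatorElement_def, affElem_inv, affElem_inv, affElem_mul, affElem_mul, affElem_mul,
    commutatorElement_def]
  congr 1
  simp only [Prod.fst_mul, Prod.fst_inv, Units.val_mul, Units.val_inv_eq_inv_val]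
  field_simp
  ring

lemma mem_setA_iff (g : AffGL n) : g ∈ setA n h ↔ ∃ x p, affElem h x p = g := by
  constructor
  · rintro ⟨x, l, A, hl, hA, hleft, hright⟩
    refine ⟨x, (Units.mk0 l hl, hA.unit), SemidirectProduct.ext ?_ (Units.ext ?_)⟩
    · rw [hleft, ← axisVec_eq_ite]
      rfl
    · exact hright.symm
  · rintro ⟨x, p, rfl⟩
    exact ⟨x, p.1, p.2, p.1.ne_zero, p.2.isUnit, by rw [← axisVec_eq_ite]; rfl, rfl⟩

def affElemOneHom : Multiplicative ℝ × GL (Fin (n - 1)) ℝ →* AffGL n where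
  toFun p := affElem h p.1.toAdd (1, p.2)
  map_one' := affElem_zero_one h
  map_mul' p q := by
    simp [affElem_mul]

lemma mem_setD_iff (g : AffGL n) :
    g ∈ setD n h ↔ ∃ x, ∃ D ∈ (GeneralLinearGroup.det).ker, affElem h x (1, D) = g := by
  simp only [MonoidHom.mem_ker, Units.ext_iff, GeneralLinearGroup.val_det_apply, Units.val_one]
  constructor
  · rintro ⟨x, D, hD, hleft, hright⟩
    refine ⟨x, GeneralLinearGroup.mkOfDetNeZero D (by simp [hD]), hD,
      SemidirectProduct.ext ?_ (Units.ext ?_)⟩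
    · rw [hleft, ← axisVec_eq_ite]
      rfl
    · rw [hright, affElem_right, val_blockDiag, Units.val_one, diagonal_one]
      rfl
  · rintro ⟨x, D, hD, rfl⟩
    refine ⟨x, D, hD, by rw [← axisVec_eq_ite]; rfl, ?_⟩
    rw [affElem_right, val_blockDiag, Units.val_one, diagonal_one]
    rfl

lemma affElem_one_eq_commutator (x : ℝ) :
    affElem h x 1 = ⁅affElem h (-x) 1, affElem h 0 (Units.mk0 2 two_ne_zero, 1)⁆ := by
  rw [commutatorElement_affElem, commutatorElement_one_left]
  congr 1
  norm_num

def subgroupA : Subgroup (AffGL n) where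
  carrier := setA n h
  one_mem' := (mem_setA_iff h 1).2 ⟨0, 1, affElem_zero_one h⟩
  mul_mem' := by
    rintro _ _ hg hk
    obtain ⟨x, p, rfl⟩ := (mem_setA_iff h _).1 hg
    obtain ⟨y, q, rfl⟩ := (mem_setA_iff h _).1 hk
    exact (mem_setA_iff h _).2 ⟨_, _, (affElem_mul h x y p q).symm⟩
  inv_mem' := by
    rintro _ hg
    obtain ⟨x, p, rfl⟩ := (mem_setA_iff h _).1 hg
    exact (mem_setA_iff h _).2 ⟨_, _, (affElem_inv h x p).symm⟩

lemma closure_setA : Subgroup.closure (setA n h) = subgroupA h :=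
  Subgroup.closure_eq (subgroupA h)

noncomputable def subgroupD : Subgroup (AffGL n) :=
  ((⊤ : Subgroup (Multiplicative ℝ)).prod (GeneralLinearGroup.det).ker).map (affElemOneHom h)

lemma coe_subgroupD : (subgroupD h : Set (AffGL n)) = setD n h := by
  ext g
  rw [mem_setD_iff]
  simp [subgroupD, affElemOneHom, Subgroup.mem_prod]

lemma commutator_subgroupA_le : ⁅subgroupA h, subgroupA h⁆ ≤ subgroupD h := by
  rw [Subgroup.commutator_le]
  intro g hg k hk
  obtain ⟨x, p, rfl⟩ := (mem_setA_iff h _).1 hg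
  obtain ⟨y, q, rfl⟩ := (mem_setA_iff h _).1 hk
  have hpq : ⁅p, q⁆ = (1, ⁅p.2, q.2⁆) :=
    Prod.ext (commutatorElement_eq_one_iff_mul_comm.2 (mul_comm _ _)) rfl
  refine ⟨(Multiplicative.ofAdd ((1 - q.1) * x - (1 - p.1) * y), ⁅p.2, q.2⁆),
    ⟨Subgroup.mem_top _, ?_⟩, ?_⟩
  · exact Abelianization.commutator_subset_ker _
      (Subgroup.commutator_mem_commutator (Subgroup.mem_top _) (Subgroup.mem_top _))
  · rw [commutatorElement_affElem, hpq]
    rfl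

lemma le_commutator_subgroupA [Nontrivial (Fin (n - 1))] :
    subgroupD h ≤ ⁅subgroupA h, subgroupA h⁆ := by
  rw [subgroupD, Subgroup.map_le_iff_le_comap, Subgroup.prod_le_iff]
  constructor
  · rintro _ ⟨x, -, rfl⟩
    rw [Subgroup.mem_comap, MonoidHom.inl_apply]
    change affElem h x.toAdd 1 ∈ _
    rw [affElem_one_eq_commutator]
    exact Subgroup.commutator_mem_commutator ((mem_setA_iff h _).2 ⟨_, _, rfl⟩)
      ((mem_setA_iff h _).2 ⟨_, _, rfl⟩)
  · rw [← GeneralLinearGroup.commutator_eq_ker_det two_ne_zero (by norm_num : (2 : ℝ) ≠ 1),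
      ← Subgroup.map_le_iff_le_comap, Subgroup.map_map, commutator_def, Subgroup.map_commutator]
    have hA : (⊤ : Subgroup (GL (Fin (n - 1)) ℝ)).map ((affElemOneHom h).comp (MonoidHom.inr _ _))
        ≤ subgroupA h := by
      rintro _ ⟨D, -, rfl⟩
      exact (mem_setA_iff h _).2 ⟨_, _, rfl⟩
    exact Subgroup.commutator_mono hA hA

lemma commutator_subgroupA [Nontrivial (Fin (n - 1))] :
    ⁅subgroupA h, subgroupA h⁆ = subgroupD h :=
  le_antisymm (commutator_subgroupA_le h) (le_commutator_subgroupA h)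

end AffGL

/-- For odd n ≥ 3, the commutator subgroup of
𝒜 = {((x₁,0,…,0), diag(l, A)) : l·det A ≠ 0} equals
𝒟 = {((x₁,0,…,0), diag(1, D)) : D ∈ SL(n-1,ℝ)}. -/
theorem commutator_setA (n : ℕ) (hn : 3 ≤ n) :
    ((⁅Subgroup.closure (setA n (by omega)), Subgroup.closure (setA n (by omega))⁆ :
        Subgroup (AffGL n)) : Set (AffGL n)) = setD n (by omega) := by
  have h : 1 + (n - 1) = n := by omega
  have : Nontrivial (Fin (n - 1)) := Fin.nontrivial_iff_two_le.2 (by omega)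
  rw [AffGL.closure_setA h, AffGL.commutator_subgroupA h, AffGL.coe_subgroupD h]
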